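/- Let à be a 2-good random m×n matrix over F_q with 2 ≤ m < n, and let C = {uà : u ∈ F_q^m} be the random linear code it generates. Then E[ W_{C,C}(x) / |C|^2 ] = q^{−2m} x_{S00}^n + ((q^m−1)/q^{2m}) Σ_{S ≠ S00} ( (1/q) x_{S00} + ((q−1)/q) x_S )^n + ((q^m−1)(q^m−q)/q^{2m}) ( (1/q^2) x_{S00} + ((q−1)/q^2) Σ_{S ≠ S00} x_S )^n. -/

import Mathlib

open scoped Classical
open Finset MvPolynomial

noncomputable section

variable {F : Type} [Field F] [Fintype F]

/-- The set of orbits of the action of `Fˣ` on `F × F` by scalar multiplication. -/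
abbrev Orb (F : Type) [Field F] [Fintype F] : Type :=
  Quotient (MulAction.orbitRel Fˣ (F × F))

/-- The orbit of the pair `(a, b)`. -/
def orbOf (a b : F) : Orb F := Quotient.mk (MulAction.orbitRel Fˣ (F × F)) (a, b)

/-- The second-order weight of a pair of vectors. -/
def sw {ι : Type} [Fintype ι] (u v : ι → F) (S : Orb F) : ℕ :=
  (Finset.univ.filter (fun i => orbOf (u i) (v i) = S)).card

/-- The second-order weight distribution. -/
def A2 {ι : Type} [Fintype ι] (U V : Finset (ι → F)) (w : Orb F → ℕ) : ℕ :=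
  ((U ×ˢ V).filter (fun p => sw p.1 p.2 = w)).card

/-- The second-order weight enumerator. -/
def W2 {ι : Type} [Fintype ι] (U V : Finset (ι → F)) : MvPolynomial (Orb F) ℚ :=
  ∑ u ∈ U, ∑ v ∈ V, ∏ S : Orb F, (X S) ^ sw u v S

/-- The monomial map `ξ_{c,σ}`. -/
def monoMap {ι : Type} (c : ι → Fˣ) (σ : Equiv.Perm ι) (v : ι → F) : ι → F :=
  fun i => (c i : F) * v (σ.symm i)

/-- The linear code generated by generator matrix `M` (row space). -/
def genCode {m n : ℕ} (M : Matrix (Fin m) (Fin n) F) : Finset (Fin n → F) :=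
  (Finset.univ : Finset (Fin m → F)).image (fun u => Matrix.vecMul u M)

/-! Normalised by `|C|²`, the enumerator `W_{C,C}` is `q^{-2m} ∑_{u,v ∈ F^m}` of the monomial of
`(uÃ, vÃ)`, since every codeword has `|ker|` preimages and `|C| · |ker| = q^m`. The pair `(0,0)`
gives `x_{S00}^n`. For a linearly independent pair, `(uÃ, vÃ)` is uniform on `(F^n)²`, so its
monomial averages to `q^{-2n} (x_{S00} + (q-1) ∑_{S ≠ S00} x_S)^n`. A nonzero dependent pair is
`(a w, b w)` with `w ≠ 0`; completing `w` to an independent pair, possible as `m ≥ 2`, shows that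
`wÃ` is uniform on `F^n`, so the monomial averages to `q^{-n} (x_{S00} + (q-1) x_{[a:b]})^n`.
Writing the dependent pairs as `(0, v)` and `(u, c u)` with `u, v ≠ 0`, each point `[0:1]`, `[1:c]`
of the projective line, that is each nonzero orbit, occurs for exactly `q^m - 1` pairs. -/

open scoped Matrix

local notation "q" => (Fintype.card F : ℚ)

theorem orbOf_eq_orbOf_iff {a b c d : F} :
    orbOf a b = orbOf c d ↔ ∃ t : Fˣ, (t : F) * c = a ∧ (t : F) * d = b := by
  unfold orbOf
  rw [Quotient.eq, MulAction.orbitRel_apply, MulAction.mem_orbit_iff]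
  simp [Units.smul_def, Prod.ext_iff]

theorem orbOf_mul_mul {t : F} (ht : t ≠ 0) (a b : F) : orbOf (t * a) (t * b) = orbOf a b :=
  orbOf_eq_orbOf_iff.2 ⟨Units.mk0 t ht, rfl, rfl⟩

theorem orbOf_eq_zero_iff {a b : F} : orbOf a b = orbOf 0 0 ↔ a = 0 ∧ b = 0 := by
  simp [orbOf_eq_orbOf_iff, eq_comm]

theorem exists_orbOf_eq (S : Orb F) : ∃ a b : F, orbOf a b = S :=
  Quotient.ind (motive := fun S => ∃ a b : F, orbOf a b = S) (fun p => ⟨p.1, p.2, rfl⟩) S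

theorem sum_orb_ne_zero {M : Type} [AddCommMonoid M] (g : Orb F → M) :
    ∑ S ∈ univ.filter (· ≠ orbOf (0 : F) 0), g S = g (orbOf 0 1) + ∑ c : F, g (orbOf 1 c) := by
  have hinj : Function.Injective (orbOf (1 : F)) := by
    intro c c' h
    obtain ⟨t, ht1, htc⟩ := orbOf_eq_orbOf_iff.1 h
    rw [mul_one] at ht1
    simpa [ht1] using htc.symm
  have hinf : orbOf (0 : F) 1 ∉ univ.image (orbOf 1) := by
    simp [orbOf_eq_orbOf_iff]
  have hset : univ.filter (· ≠ orbOf (0 : F) 0) = insert (orbOf 0 1) (univ.image (orbOf 1)) := by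
    ext S
    obtain ⟨a, b, rfl⟩ := exists_orbOf_eq S
    simp only [mem_filter, mem_univ, true_and, ne_eq, orbOf_eq_zero_iff, mem_insert, mem_image]
    constructor
    · intro hab
      by_cases ha : a = 0
      · subst ha
        have hb : b ≠ 0 := fun hb => hab ⟨rfl, hb⟩
        exact Or.inl (by simpa using orbOf_mul_mul hb 0 1)
      · exact Or.inr ⟨a⁻¹ * b, by simpa [ha] using (orbOf_mul_mul ha 1 (a⁻¹ * b)).symm⟩
    · rintro (h | ⟨c, h⟩) ⟨rfl, rfl⟩
      · simpa using orbOf_eq_zero_iff.1 h.symm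
      · simpa using orbOf_eq_zero_iff.1 h
  rw [hset, sum_insert hinf, sum_image fun c _ c' _ h => hinj h]

section PairDecomposition

variable {V M : Type} [AddCommGroup V] [Module F V] [Fintype V] [AddCommMonoid M]

theorem sum_eq_sum_smul_add_sum_linearIndependent {x : V} (hx : x ≠ 0) (g : V → M) :
    ∑ y, g y
      = ∑ c : F, g (c • x) + ∑ y ∈ univ.filter (fun y => LinearIndependent F ![x, y]), g y := by
  have hdep : univ.filter (fun y => ¬ LinearIndependent F ![x, y])
      = univ.image (fun c : F => c • x) := by
    ext y
    simp [LinearIndependent.pair_iff' hx]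
  rw [← sum_filter_not_add_sum_filter univ (fun y => LinearIndependent F ![x, y]), hdep,
    sum_image fun c _ c' _ h => smul_left_injective F hx h]

theorem sum_sum_eq_sum_zero_add_sum_ne_zero [DecidableEq V] (f : V → V → M) :
    ∑ x, ∑ y, f x y = ∑ y, f 0 y + ∑ x ∈ ({0} : Finset V)ᶜ,
      (∑ c : F, f x (c • x) + ∑ y ∈ univ.filter (fun y => LinearIndependent F ![x, y]), f x y) := by
  rw [Fintype.sum_eq_add_sum_compl 0]
  exact congrArg _ <| sum_congr rfl fun x hx =>
    sum_eq_sum_smul_add_sum_linearIndependent (by simpa using hx) (f x)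

theorem card_linearIndependent_pair {x : V} (hx : x ≠ 0) :
    #(univ.filter (fun y => LinearIndependent F ![x, y])) = Fintype.card V - Fintype.card F := by
  have h := sum_eq_sum_smul_add_sum_linearIndependent (F := F) hx (fun _ => 1)
  simp only [sum_const, smul_eq_mul, mul_one, card_univ] at h
  omega

end PairDecomposition

theorem not_linearIndependent_pair {K : Type} [Field K] (a b : K) :
    ¬ LinearIndependent K ![a, b] := fun h => by
  simpa using h.fintype_card_le_finrank

theorem sum_compl_zero_const {V σ : Type} [Fintype V] [Zero V] [DecidableEq V]
    (p : MvPolynomial σ ℚ) :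
    ∑ _v ∈ ({0} : Finset V)ᶜ, p = C ((Fintype.card V : ℚ) - 1) * p := by
  rw [sum_const, card_compl, card_singleton, nsmul_eq_mul, Nat.cast_sub Fintype.card_pos]
  simp

theorem sum_X_orbOf_mul (a b : F) :
    ∑ t : F, (X (orbOf (t * a) (t * b)) : MvPolynomial (Orb F) ℚ)
      = X (orbOf 0 0) + C (q - 1) * X (orbOf a b) := by
  rw [Fintype.sum_eq_add_sum_compl 0, zero_mul, zero_mul, ← sum_compl_zero_const]
  exact congrArg _ <| sum_congr rfl fun t ht => by rw [orbOf_mul_mul (by simpa using ht)]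

theorem sum_X_orbOf :
    ∑ a : F, ∑ b : F, (X (orbOf a b) : MvPolynomial (Orb F) ℚ)
      = X (orbOf 0 0) + C (q - 1) * ∑ S ∈ univ.filter (· ≠ orbOf (0 : F) 0), X S := by
  have hline : ∑ b : F, (X (orbOf 0 b) : MvPolynomial (Orb F) ℚ)
      = X (orbOf 0 0) + C (q - 1) * X (orbOf 0 1) := by
    simpa using sum_X_orbOf_mul (0 : F) 1
  have hscale : ∀ a ∈ ({0} : Finset F)ᶜ,
      ∑ c : F, (X (orbOf a (c • a)) : MvPolynomial (Orb F) ℚ) = ∑ c : F, X (orbOf 1 c) := by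
    intro a ha
    refine sum_congr rfl fun c _ => ?_
    rw [smul_eq_mul, mul_comm, ← orbOf_mul_mul (by simpa using ha) 1 c, mul_one]
  rw [sum_sum_eq_sum_zero_add_sum_ne_zero (F := F), hline, sum_orb_ne_zero]
  simp only [not_linearIndependent_pair, filter_false, sum_empty, add_zero]
  rw [sum_congr rfl hscale, sum_compl_zero_const]
  ring

section Monomial

variable {ι : Type} [Fintype ι]

def orbMonomial (u v : ι → F) : MvPolynomial (Orb F) ℚ :=
  ∏ i, X (orbOf (u i) (v i))

theorem prod_X_pow_sw (u v : ι → F) :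
    ∏ S : Orb F, (X S : MvPolynomial (Orb F) ℚ) ^ sw u v S = orbMonomial u v := by
  rw [orbMonomial, ← prod_fiberwise' univ (fun i => orbOf (u i) (v i))]
  exact prod_congr rfl fun S _ => (prod_const _).symm

theorem W2_eq_sum_orbMonomial (U V : Finset (ι → F)) :
    W2 U V = ∑ u ∈ U, ∑ v ∈ V, orbMonomial u v := by
  simp only [W2, prod_X_pow_sw]

theorem orbMonomial_zero : orbMonomial (0 : ι → F) 0 = X (orbOf 0 0) ^ Fintype.card ι := by
  simp [orbMonomial]

theorem sum_sum_orbMonomial [DecidableEq ι] :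
    ∑ u : ι → F, ∑ v : ι → F, orbMonomial u v
      = (∑ a : F, ∑ b : F, X (orbOf a b)) ^ Fintype.card ι := by
  rw [← Fintype.sum_prod_type', ← Fintype.sum_prod_type', ← card_univ, ← prod_const,
    Fintype.prod_sum]
  exact Fintype.sum_equiv (Equiv.arrowProdEquivProdArrow ι (fun _ => F) (fun _ => F)).symm _ _
    fun _ => rfl

theorem sum_orbMonomial_smul [DecidableEq ι] (a b : F) :
    ∑ c : ι → F, orbMonomial (a • c) (b • c)
      = (∑ t : F, X (orbOf (t * a) (t * b))) ^ Fintype.card ι := by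
  rw [← card_univ, ← prod_const, Fintype.prod_sum]
  simp [orbMonomial, mul_comm]

end Monomial

theorem sum_comp_addMonoidHom {G H β : Type} [AddGroup G] [Fintype G] [AddMonoid H]
    [DecidableEq H] [AddCommMonoid β] (f : G →+ H) (g : H → β) :
    ∑ x, g (f x) = #(univ.filter fun x => f x = 0) • ∑ y ∈ univ.image f, g y := by
  rw [sum_comp, smul_sum]
  refine sum_congr rfl fun y hy => ?_
  obtain ⟨x, -, rfl⟩ := mem_image.1 hy
  rw [AddMonoidHom.card_fiber_eq_of_mem_range f ⟨x, rfl⟩ ⟨0, map_zero f⟩]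

section GenCode

variable {m n : ℕ} (M : Matrix (Fin m) (Fin n) F)

theorem sum_vecMul_eq_smul_sum_genCode {β : Type} [AddCommMonoid β] (g : (Fin n → F) → β) :
    ∑ u : Fin m → F, g (u ᵥ* M)
      = #(univ.filter fun u : Fin m → F => u ᵥ* M = 0) • ∑ c ∈ genCode M, g c :=
  sum_comp_addMonoidHom (Matrix.vecMulLinear M).toAddMonoidHom g

theorem card_genCode_mul_card_ker :
    #(genCode M) * #(univ.filter fun u : Fin m → F => u ᵥ* M = 0) = Fintype.card F ^ m := by
  have h := sum_vecMul_eq_smul_sum_genCode M (fun _ => 1)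
  simp only [sum_const, card_univ, Fintype.card_fun, Fintype.card_fin, smul_eq_mul, mul_one] at h
  rw [h, mul_comm]

theorem inv_card_sq_smul_W2_genCode :
    ((#(genCode M) : ℚ) ^ 2)⁻¹ • W2 (genCode M) (genCode M)
      = (q ^ (2 * m))⁻¹ • ∑ u : Fin m → F, ∑ v : Fin m → F, orbMonomial (u ᵥ* M) (v ᵥ* M) := by
  set k := #(univ.filter fun u : Fin m → F => u ᵥ* M = 0)
  have hsum : ∑ u : Fin m → F, ∑ v : Fin m → F, orbMonomial (u ᵥ* M) (v ᵥ* M)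
      = (k * k) • W2 (genCode M) (genCode M) := by
    rw [W2_eq_sum_orbMonomial, mul_smul,
      ← sum_vecMul_eq_smul_sum_genCode M (fun c => ∑ d ∈ genCode M, orbMonomial c d), smul_sum]
    exact sum_congr rfl fun u _ => sum_vecMul_eq_smul_sum_genCode M _
  have hcard : q ^ (2 * m) = ((#(genCode M) : ℚ) * k) ^ 2 := by
    rw [mul_comm 2, pow_mul]
    exact_mod_cast congrArg (· ^ 2) (card_genCode_mul_card_ker M).symm
  have hk : (k : ℚ) ≠ 0 := Nat.cast_ne_zero.2 <| card_ne_zero_of_mem (a := 0) <| by simp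
  rw [hsum, ← Nat.cast_smul_eq_nsmul ℚ, smul_smul, hcard]
  congr 1
  push_cast
  field_simp

theorem sum_div_card_sq_smul_W2_genCode {Ω : Type} [Fintype Ω] (P : Ω → ℚ)
    (A : Ω → Matrix (Fin m) (Fin n) F) :
    ∑ ω, (P ω / (#(genCode (A ω)) : ℚ) ^ 2) • W2 (genCode (A ω)) (genCode (A ω))
      = (q ^ (2 * m))⁻¹ •
          ∑ u : Fin m → F, ∑ v : Fin m → F, ∑ ω, P ω • orbMonomial (u ᵥ* A ω) (v ᵥ* A ω) := by
  simp only [div_eq_mul_inv, mul_smul, inv_card_sq_smul_W2_genCode, smul_comm (P _), smul_sum]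
  rw [sum_comm]
  exact sum_congr rfl fun _ _ => sum_comm

end GenCode

def IsTwoGood {m n : ℕ} {Ω : Type} [Fintype Ω] (P : Ω → ℚ) (A : Ω → Matrix (Fin m) (Fin n) F) :
    Prop :=
  ∀ U : Matrix (Fin 2) (Fin m) F, U.rank = 2 → ∀ B : Matrix (Fin 2) (Fin n) F,
    (∑ ω ∈ univ.filter (fun ω => U * A ω = B), P ω) = 1 / q ^ (2 * n)

theorem rank_of_linearIndependent_pair {K : Type} [Field K] {m : ℕ} {u v : Fin m → K}
    (h : LinearIndependent K ![u, v]) : (Matrix.of ![u, v]).rank = 2 := by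
  rw [Matrix.rank_eq_finrank_span_row]
  exact (finrank_span_eq_card h).trans (Fintype.card_fin 2)

namespace IsTwoGood

variable {m n : ℕ} {Ω : Type} [Fintype Ω] {P : Ω → ℚ} {A : Ω → Matrix (Fin m) (Fin n) F}
  {E : Type} [AddCommGroup E] [Module ℚ E]

theorem sum_smul_mul (hA : IsTwoGood P A) {U : Matrix (Fin 2) (Fin m) F} (hU : U.rank = 2)
    (g : Matrix (Fin 2) (Fin n) F → E) :
    ∑ ω, P ω • g (U * A ω) = (q ^ (2 * n))⁻¹ • ∑ B, g B := by
  rw [← sum_fiberwise univ (fun ω => U * A ω), smul_sum]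
  refine sum_congr rfl fun B _ => ?_
  rw [sum_congr rfl fun ω hω => by rw [(mem_filter.1 hω).2], ← sum_smul, hA U hU B, one_div]

theorem sum_smul_vecMul_pair (hA : IsTwoGood P A) {u v : Fin m → F}
    (h : LinearIndependent F ![u, v]) (g : (Fin n → F) → (Fin n → F) → E) :
    ∑ ω, P ω • g (u ᵥ* A ω) (v ᵥ* A ω) = (q ^ (2 * n))⁻¹ • ∑ c, ∑ d, g c d := by
  refine (hA.sum_smul_mul (rank_of_linearIndependent_pair h) fun B => g (B 0) (B 1)).trans ?_
  rw [← Fintype.sum_prod_type']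
  congr 1
  exact Fintype.sum_equiv (finTwoArrowEquiv (Fin n → F)) _ _ fun _ => rfl

theorem sum_smul_vecMul (hA : IsTwoGood P A) (hm : 2 ≤ m) {w : Fin m → F} (hw : w ≠ 0)
    (g : (Fin n → F) → E) :
    ∑ ω, P ω • g (w ᵥ* A ω) = (q ^ n)⁻¹ • ∑ c, g c := by
  obtain ⟨v, hv⟩ := exists_linearIndependent_pair_of_one_lt_finrank
    (by rwa [Module.finrank_fin_fun]) hw
  rw [hA.sum_smul_vecMul_pair hv fun c _ => g c, sum_comm, sum_const, card_univ,
    Fintype.card_fun, Fintype.card_fin, ← Nat.cast_smul_eq_nsmul ℚ, smul_smul]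
  congr 1
  push_cast
  rw [two_mul, pow_add]
  field_simp

theorem sum_smul_orbMonomial_of_linearIndependent (hA : IsTwoGood P A) {u v : Fin m → F}
    (h : LinearIndependent F ![u, v]) :
    ∑ ω, P ω • orbMonomial (u ᵥ* A ω) (v ᵥ* A ω)
      = (q ^ (2 * n))⁻¹ •
          (X (orbOf 0 0) + C (q - 1) * ∑ S ∈ univ.filter (· ≠ orbOf (0 : F) 0), X S) ^ n := by
  rw [hA.sum_smul_vecMul_pair h, sum_sum_orbMonomial, sum_X_orbOf, Fintype.card_fin]

theorem sum_smul_orbMonomial_smul (hA : IsTwoGood P A) (hm : 2 ≤ m) {w : Fin m → F}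
    (hw : w ≠ 0) (a b : F) :
    ∑ ω, P ω • orbMonomial ((a • w) ᵥ* A ω) ((b • w) ᵥ* A ω)
      = (q ^ n)⁻¹ • (X (orbOf 0 0) + C (q - 1) * X (orbOf a b)) ^ n := by
  simp only [Matrix.smul_vecMul]
  rw [hA.sum_smul_vecMul hm hw fun c => orbMonomial (a • c) (b • c), sum_orbMonomial_smul,
    sum_X_orbOf_mul, Fintype.card_fin]

theorem sum_add_sum_smul_orbMonomial_of_ne_zero (hA : IsTwoGood P A) (hm : 2 ≤ m)
    {u : Fin m → F} (hu : u ≠ 0) :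
    ∑ c : F, ∑ ω, P ω • orbMonomial (u ᵥ* A ω) ((c • u) ᵥ* A ω)
        + ∑ v ∈ univ.filter (fun v => LinearIndependent F ![u, v]),
            ∑ ω, P ω • orbMonomial (u ᵥ* A ω) (v ᵥ* A ω)
      = (q ^ n)⁻¹ • ∑ c : F, (X (orbOf 0 0) + C (q - 1) * X (orbOf 1 c)) ^ n
        + (q ^ m - q) • (q ^ (2 * n))⁻¹ •
            (X (orbOf 0 0) + C (q - 1) * ∑ S ∈ univ.filter (· ≠ orbOf (0 : F) 0), X S) ^ n := by
  rw [sum_congr rfl fun c _ => by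
      simpa only [one_smul] using hA.sum_smul_orbMonomial_smul hm hu 1 c,
    ← smul_sum,
    sum_congr rfl fun v hv => hA.sum_smul_orbMonomial_of_linearIndependent (mem_filter.1 hv).2,
    sum_const, card_linearIndependent_pair hu, ← Nat.cast_smul_eq_nsmul ℚ,
    Fintype.card_fun, Fintype.card_fin, Nat.cast_sub (Nat.le_self_pow (by omega) _)]
  push_cast
  rfl

theorem sum_sum_sum_smul_orbMonomial (hA : IsTwoGood P A) (hP1 : ∑ ω, P ω = 1) (hm : 2 ≤ m) :
    ∑ u : Fin m → F, ∑ v : Fin m → F, ∑ ω, P ω • orbMonomial (u ᵥ* A ω) (v ᵥ* A ω)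
      = X (orbOf 0 0) ^ n
        + C ((q ^ m - 1) / q ^ n)
          * ∑ S ∈ univ.filter (· ≠ orbOf (0 : F) 0), (X (orbOf 0 0) + C (q - 1) * X S) ^ n
        + C ((q ^ m - 1) * (q ^ m - q) / q ^ (2 * n))
          * (X (orbOf 0 0) + C (q - 1) * ∑ S ∈ univ.filter (· ≠ orbOf (0 : F) 0), X S) ^ n := by
  have hzero : ∑ ω, P ω • orbMonomial ((0 : Fin m → F) ᵥ* A ω) (0 ᵥ* A ω)
      = X (orbOf 0 0) ^ n := by
    simp only [Matrix.zero_vecMul, orbMonomial_zero, Fintype.card_fin, ← sum_smul, hP1, one_smul]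
  have hline : ∀ v ∈ ({0} : Finset (Fin m → F))ᶜ,
      ∑ ω, P ω • orbMonomial ((0 : Fin m → F) ᵥ* A ω) (v ᵥ* A ω)
        = (q ^ n)⁻¹ • (X (orbOf 0 0) + C (q - 1) * X (orbOf 0 1)) ^ n := fun v hv => by
    simpa only [zero_smul, one_smul] using
      hA.sum_smul_orbMonomial_smul hm (by simpa using hv) 0 1
  have hfirst := (Fintype.sum_eq_add_sum_compl 0 _).trans
    (congrArg₂ (· + ·) hzero ((sum_congr rfl hline).trans (sum_compl_zero_const _)))
  have hrest := (sum_congr rfl fun u hu =>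
    hA.sum_add_sum_smul_orbMonomial_of_ne_zero hm (by simpa using hu)).trans
      (sum_compl_zero_const _)
  rw [sum_sum_eq_sum_zero_add_sum_ne_zero (F := F), hfirst, hrest,
    sum_orb_ne_zero fun S => (X (orbOf 0 0) + C (q - 1) * X S) ^ n]
  simp only [C_mul', Fintype.card_fun, Fintype.card_fin, Nat.cast_pow]
  module

end IsTwoGood

theorem C_one_div_mul_add_C_div_mul {σ : Type} (r s : ℚ) (x y : MvPolynomial σ ℚ) :
    C (1 / r) * x + C (s / r) * y = r⁻¹ • (x + C s * y) := by
  simp only [C_mul', smul_add, smul_smul, div_eq_inv_mul, mul_one]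

theorem stmt_12_general {F : Type} [Field F] [Fintype F] {m n : ℕ}
    (hm : 2 ≤ m)
    {Ω : Type} [Fintype Ω] (P : Ω → ℚ) (hP1 : (∑ ω, P ω) = 1)
    (A : Ω → Matrix (Fin m) (Fin n) F)
    (h2good : ∀ U : Matrix (Fin 2) (Fin m) F, U.rank = 2 →
      ∀ B : Matrix (Fin 2) (Fin n) F,
        (∑ ω ∈ Finset.univ.filter (fun ω => U * A ω = B), P ω)
          = 1 / (Fintype.card F : ℚ) ^ (2 * n)) :
    (∑ ω, (P ω / ((genCode (A ω)).card : ℚ) ^ 2) • W2 (genCode (A ω)) (genCode (A ω)))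
      = C (1 / (Fintype.card F : ℚ) ^ (2 * m)) * X (orbOf (0 : F) 0) ^ n
        + C (((Fintype.card F : ℚ) ^ m - 1) / (Fintype.card F : ℚ) ^ (2 * m))
          * ∑ S ∈ Finset.univ.filter (fun S : Orb F => S ≠ orbOf (0 : F) 0),
              (C (1 / (Fintype.card F : ℚ)) * X (orbOf (0 : F) 0)
                + C (((Fintype.card F : ℚ) - 1) / (Fintype.card F : ℚ)) * X S) ^ n
        + C (((Fintype.card F : ℚ) ^ m - 1) * ((Fintype.card F : ℚ) ^ m - (Fintype.card F : ℚ))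
              / (Fintype.card F : ℚ) ^ (2 * m))
          * (C (1 / (Fintype.card F : ℚ) ^ 2) * X (orbOf (0 : F) 0)
              + C (((Fintype.card F : ℚ) - 1) / (Fintype.card F : ℚ) ^ 2)
                * ∑ S ∈ Finset.univ.filter (fun S : Orb F => S ≠ orbOf (0 : F) 0), X S) ^ n := by
  rw [sum_div_card_sq_smul_W2_genCode, IsTwoGood.sum_sum_sum_smul_orbMonomial h2good hP1 hm]
  simp only [C_one_div_mul_add_C_div_mul]
  simp only [smul_pow, ← smul_sum, C_mul']
  module

/-- Average normalized second-order weight enumerator of the random linear code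
generated by a 2-good random generator matrix. -/
theorem stmt_12 {F : Type} [Field F] [Fintype F] {m n : ℕ}
    (hm : 2 ≤ m) (hmn : m < n)
    {Ω : Type} [Fintype Ω] (P : Ω → ℚ) (hP0 : ∀ ω, 0 ≤ P ω) (hP1 : (∑ ω, P ω) = 1)
    (A : Ω → Matrix (Fin m) (Fin n) F)
    (h2good : ∀ U : Matrix (Fin 2) (Fin m) F, U.rank = 2 →
      ∀ B : Matrix (Fin 2) (Fin n) F,
        (∑ ω ∈ Finset.univ.filter (fun ω => U * A ω = B), P ω)
          = 1 / (Fintype.card F : ℚ) ^ (2 * n)) :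
    (∑ ω, (P ω / ((genCode (A ω)).card : ℚ) ^ 2) • W2 (genCode (A ω)) (genCode (A ω)))
      = C (1 / (Fintype.card F : ℚ) ^ (2 * m)) * X (orbOf (0 : F) 0) ^ n
        + C (((Fintype.card F : ℚ) ^ m - 1) / (Fintype.card F : ℚ) ^ (2 * m))
          * ∑ S ∈ Finset.univ.filter (fun S : Orb F => S ≠ orbOf (0 : F) 0),
              (C (1 / (Fintype.card F : ℚ)) * X (orbOf (0 : F) 0)
                + C (((Fintype.card F : ℚ) - 1) / (Fintype.card F : ℚ)) * X S) ^ n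
        + C (((Fintype.card F : ℚ) ^ m - 1) * ((Fintype.card F : ℚ) ^ m - (Fintype.card F : ℚ))
              / (Fintype.card F : ℚ) ^ (2 * m))
          * (C (1 / (Fintype.card F : ℚ) ^ 2) * X (orbOf (0 : F) 0)
              + C (((Fintype.card F : ℚ) - 1) / (Fintype.card F : ℚ) ^ 2)
                * ∑ S ∈ Finset.univ.filter (fun S : Orb F => S ≠ orbOf (0 : F) 0), X S) ^ n :=
  stmt_12_general hm P hP1 A h2good
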